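/- The ECHO sequence satisfies the seven-term recurrence: for every n ≥ 0, b n · b (n+7) = 5 · b (n+3) · b (n+4) − b (n+1) · b (n+6). (In particular, the two recursive definitions of the ECHO sequence agree.) -/
import Mathlib


/-- The ECHO sequence. -/
def echo : ℕ → ℚ
  | 0 => 1
  | 1 => 1
  | 2 => 2
  | 3 => 1
  | n + 4 =>
      (echo (n + 3) * echo (n + 1) - (if 3 ∣ (n + 4) then 3 else 1) * echo (n + 2) ^ 2) /
        echo n

/-- residue table of `echo` mod 5, period 24 -/
instance : Fact (Nat.Prime 5) := ⟨by norm_num⟩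

def rtab : ℕ → ZMod 5
  | 0 => 1 | 1 => 1 | 2 => 2 | 3 => 1 | 4 => 2 | 5 => 3 | 6 => 3 | 7 => 2
  | 8 => 1 | 9 => 2 | 10 => 1 | 11 => 1 | 12 => 4 | 13 => 4 | 14 => 3 | 15 => 4
  | 16 => 3 | 17 => 2 | 18 => 2 | 19 => 3 | 20 => 4 | 21 => 3 | 22 => 4 | _ => 4

def rr (n : ℕ) : ZMod 5 := rtab (n % 24)

lemma echo_succ4 (n : ℕ) : echo (n + 4) =
    (echo (n + 3) * echo (n + 1) - (if 3 ∣ (n + 4) then 3 else 1) * echo (n + 2) ^ 2) /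
      echo n := rfl

lemma rr_ne_zero (n : ℕ) : rr n ≠ 0 := by
  unfold rr
  have h : n % 24 < 24 := Nat.mod_lt _ (by norm_num)
  set m := n % 24 with hm
  interval_cases m <;> decide

lemma rr_key (n : ℕ) :
    rr (n + 3) * rr (n + 1) - (if 3 ∣ (n + 4) then (3 : ZMod 5) else 1) * rr (n + 2) ^ 2
      = rr (n + 4) * rr n := by
  have hc : (if 3 ∣ (n + 4) then (3 : ZMod 5) else 1)
      = (if (n % 24 + 4) % 3 = 0 then (3 : ZMod 5) else 1) := by
    by_cases h : 3 ∣ (n + 4)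
    · rw [if_pos h, if_pos (by omega)]
    · rw [if_neg h, if_neg (by omega)]
  have e1 : rr (n+1) = rtab ((n % 24 + 1) % 24) := by unfold rr; congr 1; omega
  have e2 : rr (n+2) = rtab ((n % 24 + 2) % 24) := by unfold rr; congr 1; omega
  have e3 : rr (n+3) = rtab ((n % 24 + 3) % 24) := by unfold rr; congr 1; omega
  have e4 : rr (n+4) = rtab ((n % 24 + 4) % 24) := by unfold rr; congr 1; omega
  have e0 : rr n = rtab (n % 24) := rfl
  rw [e0, e1, e2, e3, e4]
  have h : n % 24 < 24 := Nat.mod_lt _ (by norm_num)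
  set m := n % 24 with hm
  rw [hc]
  interval_cases m <;> decide

/-- 5-adic integrality with residue pattern -/
def S (n : ℕ) : Prop :=
  ∃ x y : ℤ, (y : ℚ) * echo n = x ∧ (x : ZMod 5) = rr n * (y : ZMod 5) ∧ (y : ZMod 5) ≠ 0

lemma S_ne_zero {n : ℕ} (h : S n) : echo n ≠ 0 := by
  obtain ⟨x, y, hxy, hres, hy⟩ := h
  have hx : (x : ZMod 5) ≠ 0 := by
    rw [hres]
    exact mul_ne_zero (rr_ne_zero n) hy
  have hx0 : (x : ℚ) ≠ 0 := by
    intro h0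
    apply hx
    have : x = 0 := by exact_mod_cast h0
    simp [this]
  have hy0 : (y : ℚ) ≠ 0 := by
    intro h0
    apply hy
    have : y = 0 := by exact_mod_cast h0
    simp [this]
  intro h0
  rw [h0, mul_zero] at hxy
  exact hx0 hxy.symm

lemma S_all : ∀ n : ℕ, S n := by
  have base0 : S 0 := ⟨1, 1, by norm_num [echo], by decide, by decide⟩
  have base1 : S 1 := ⟨1, 1, by norm_num [echo], by decide, by decide⟩
  have base2 : S 2 := ⟨2, 1, by norm_num [echo], by decide, by decide⟩
  have base3 : S 3 := ⟨1, 1, by norm_num [echo], by decide, by decide⟩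
  have step : ∀ n, S n → S (n+1) → S (n+2) → S (n+3) → S (n+4) := by
    intro n h0 h1 h2 h3
    obtain ⟨x0, y0, hx0, hr0, hy0⟩ := h0
    obtain ⟨x1, y1, hx1, hr1, hy1⟩ := h1
    obtain ⟨x2, y2, hx2, hr2, hy2⟩ := h2
    obtain ⟨x3, y3, hx3, hr3, hy3⟩ := h3
    have he0 : echo n ≠ 0 := S_ne_zero ⟨x0, y0, hx0, hr0, hy0⟩
    set C : ℤ := if 3 ∣ (n + 4) then 3 else 1 with hC
    refine ⟨(x3 * x1 * y2 ^ 2 - C * x2 ^ 2 * y3 * y1) * y0, y3 * y1 * y2 ^ 2 * x0, ?_, ?_, ?_⟩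
    · have hCq : ((C : ℚ)) = (if 3 ∣ (n + 4) then (3:ℚ) else 1) := by
        rw [hC]; split <;> norm_num
      rw [echo_succ4, ← hCq]
      push_cast
      rw [← hx0, ← hx1, ← hx2, ← hx3]
      field_simp
    · have hCz : ((C : ZMod 5)) = (if 3 ∣ (n + 4) then (3 : ZMod 5) else 1) := by
        rw [hC]; split <;> norm_num
      push_cast
      rw [hr3, hr1, hr2, hr0, hCz]
      have := rr_key n
      linear_combination (↑y3 * ↑y1 * ↑y2 ^ 2 * ↑y0 : ZMod 5) * this
    · push_cast
      refine mul_ne_zero (mul_ne_zero (mul_ne_zero hy3 hy1) (pow_ne_zero _ hy2)) ?_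
      rw [hr0]
      exact mul_ne_zero (rr_ne_zero n) hy0
  have win : ∀ n, S n ∧ S (n+1) ∧ S (n+2) ∧ S (n+3) := by
    intro n
    induction n with
    | zero => exact ⟨base0, base1, base2, base3⟩
    | succ k ih =>
      obtain ⟨a, b, c, d⟩ := ih
      exact ⟨b, c, d, step k a b c d⟩
  exact fun n => (win n).1

lemma echo_ne_zero (n : ℕ) : echo n ≠ 0 := S_ne_zero (S_all n)
def qA (n : ℕ) : ℚ := if n % 3 = 1 then 3 else 1
def qB (n : ℕ) : ℚ := if n % 3 = 2 then 3 else 1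
def qC (n : ℕ) : ℚ := if n % 3 = 0 then 3 else 1
def qD (n : ℕ) : ℚ := if n % 3 = 1 then -1 else -3

def Qex (n : ℕ) : ℚ :=
  qA n * echo n ^ 2 * echo (n + 3) ^ 2 + qB n * echo n * echo (n + 2) ^ 3
    + qC n * echo (n + 1) ^ 3 * echo (n + 3) + qD n * echo (n + 1) ^ 2 * echo (n + 2) ^ 2

lemma Rrel (n : ℕ) : echo (n + 4) * echo n =
    echo (n + 3) * echo (n + 1) - (if 3 ∣ (n + 4) then (3:ℚ) else 1) * echo (n + 2) ^ 2 := by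
  rw [echo_succ4, div_mul_cancel₀ _ (echo_ne_zero n)]

lemma Qrel : ∀ n, Qex n = 0 := by
  intro n
  induction n with
  | zero =>
    show qA 0 * echo 0 ^ 2 * echo 3 ^ 2 + qB 0 * echo 0 * echo 2 ^ 3
      + qC 0 * echo 1 ^ 3 * echo 3 + qD 0 * echo 1 ^ 2 * echo 2 ^ 2 = 0
    norm_num [echo, qA, qB, qC, qD]
  | succ k ih =>
    have h4 := Rrel k
    have ht3 : k % 3 = 0 ∨ k % 3 = 1 ∨ k % 3 = 2 := by omega
    rcases ht3 with ht | ht | ht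
    · -- k % 3 = 0
      rw [if_neg (by omega)] at h4
      have h1 : (k + 1) % 3 = 1 := by omega
      have ihe : (1 : ℚ) * echo k ^ 2 * echo (k + 3) ^ 2 + (1 : ℚ) * echo k * echo (k + 2) ^ 3
          + (3 : ℚ) * echo (k + 1) ^ 3 * echo (k + 3) + (-3 : ℚ) * echo (k + 1) ^ 2 * echo (k + 2) ^ 2 = 0 := by
        have := ih
        simp only [Qex, qA, qB, qC, qD, ht] at this
        norm_num at this ⊢
        linear_combination this
      have key : echo k ^ 2 * ((3 : ℚ) * echo (k + 1) ^ 2 * echo (k + 4) ^ 2 + (1 : ℚ) * echo (k + 1) * echo (k + 3) ^ 3 + (1 : ℚ) * echo (k + 2) ^ 3 * echo (k + 4) + (-1 : ℚ) * echo (k + 2) ^ 2 * echo (k + 3) ^ 2) = 0 := by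
        linear_combination ((3 : ℚ) * echo (k + 1) ^ 2 * (echo (k + 4) * echo k + (echo (k + 3) * echo (k + 1) - 1 * echo (k + 2) ^ 2))
          + (1 : ℚ) * echo (k + 2) ^ 3 * echo k) * h4 + (echo (k + 3) * echo (k + 1) - 1 * echo (k + 2) ^ 2) * ihe
      have hz := (mul_eq_zero.mp key).resolve_left (pow_ne_zero 2 (echo_ne_zero k))
      simp only [Qex, qA, qB, qC, qD, h1]
      norm_num
      linear_combination hz
    · -- k % 3 = 1
      rw [if_neg (by omega)] at h4
      have h1 : (k + 1) % 3 = 2 := by omega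
      have ihe : (3 : ℚ) * echo k ^ 2 * echo (k + 3) ^ 2 + (1 : ℚ) * echo k * echo (k + 2) ^ 3
          + (1 : ℚ) * echo (k + 1) ^ 3 * echo (k + 3) + (-1 : ℚ) * echo (k + 1) ^ 2 * echo (k + 2) ^ 2 = 0 := by
        have := ih
        simp only [Qex, qA, qB, qC, qD, ht] at this
        norm_num at this ⊢
        linear_combination this
      have key : echo k ^ 2 * ((1 : ℚ) * echo (k + 1) ^ 2 * echo (k + 4) ^ 2 + (3 : ℚ) * echo (k + 1) * echo (k + 3) ^ 3 + (1 : ℚ) * echo (k + 2) ^ 3 * echo (k + 4) + (-3 : ℚ) * echo (k + 2) ^ 2 * echo (k + 3) ^ 2) = 0 := by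
        linear_combination ((1 : ℚ) * echo (k + 1) ^ 2 * (echo (k + 4) * echo k + (echo (k + 3) * echo (k + 1) - 1 * echo (k + 2) ^ 2))
          + (1 : ℚ) * echo (k + 2) ^ 3 * echo k) * h4 + (echo (k + 3) * echo (k + 1) - 1 * echo (k + 2) ^ 2) * ihe
      have hz := (mul_eq_zero.mp key).resolve_left (pow_ne_zero 2 (echo_ne_zero k))
      simp only [Qex, qA, qB, qC, qD, h1]
      norm_num
      linear_combination hz
    · -- k % 3 = 2
      rw [if_pos (by omega)] at h4
      have h1 : (k + 1) % 3 = 0 := by omega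
      have ihe : (1 : ℚ) * echo k ^ 2 * echo (k + 3) ^ 2 + (3 : ℚ) * echo k * echo (k + 2) ^ 3
          + (1 : ℚ) * echo (k + 1) ^ 3 * echo (k + 3) + (-3 : ℚ) * echo (k + 1) ^ 2 * echo (k + 2) ^ 2 = 0 := by
        have := ih
        simp only [Qex, qA, qB, qC, qD, ht] at this
        norm_num at this ⊢
        linear_combination this
      have key : echo k ^ 2 * ((1 : ℚ) * echo (k + 1) ^ 2 * echo (k + 4) ^ 2 + (1 : ℚ) * echo (k + 1) * echo (k + 3) ^ 3 + (3 : ℚ) * echo (k + 2) ^ 3 * echo (k + 4) + (-3 : ℚ) * echo (k + 2) ^ 2 * echo (k + 3) ^ 2) = 0 := by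
        linear_combination ((1 : ℚ) * echo (k + 1) ^ 2 * (echo (k + 4) * echo k + (echo (k + 3) * echo (k + 1) - 3 * echo (k + 2) ^ 2))
          + (3 : ℚ) * echo (k + 2) ^ 3 * echo k) * h4 + (echo (k + 3) * echo (k + 1) - 3 * echo (k + 2) ^ 2) * ihe
      have hz := (mul_eq_zero.mp key).resolve_left (pow_ne_zero 2 (echo_ne_zero k))
      simp only [Qex, qA, qB, qC, qD, h1]
      norm_num
      linear_combination hz

theorem echo_seven_term_recurrence :
    ∀ n : ℕ, echo n * echo (n + 7) =
      5 * echo (n + 3) * echo (n + 4) - echo (n + 1) * echo (n + 6) := by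
  intro n
  have h4 := Rrel n
  have h5 := Rrel (n + 1)
  have h6 := Rrel (n + 2)
  have h7 := Rrel (n + 3)
  have hQ0 := Qrel n
  have hm : echo n ^ 2 * echo (n + 1) ^ 2 * echo (n + 2) * echo (n + 3) ≠ 0 :=
    mul_ne_zero (mul_ne_zero (mul_ne_zero (pow_ne_zero 2 (echo_ne_zero n))
      (pow_ne_zero 2 (echo_ne_zero (n + 1)))) (echo_ne_zero (n + 2))) (echo_ne_zero (n + 3))
  have ht3 : n % 3 = 0 ∨ n % 3 = 1 ∨ n % 3 = 2 := by omega
  rcases ht3 with ht | ht | ht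
  · -- n % 3 = 0
    rw [if_neg (show ¬ (3 ∣ (n + 0 + 4)) by omega)] at h4
    rw [if_neg (show ¬ (3 ∣ (n + 1 + 4)) by omega)] at h5
    rw [if_pos (show 3 ∣ (n + 2 + 4) by omega)] at h6
    rw [if_neg (show ¬ (3 ∣ (n + 3 + 4)) by omega)] at h7
    have hQ : (1 : ℚ) * echo n ^ 2 * echo (n + 3) ^ 2 + (1 : ℚ) * echo n * echo (n + 2) ^ 3
        + (3 : ℚ) * echo (n + 1) ^ 3 * echo (n + 3) + (-3 : ℚ) * echo (n + 1) ^ 2 * echo (n + 2) ^ 2 = 0 := by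
      have := hQ0
      simp only [Qex, qA, qB, qC, qD, ht] at this
      norm_num at this ⊢
      linear_combination this
    have key : echo n ^ 2 * echo (n + 1) ^ 2 * echo (n + 2) * echo (n + 3) *
        (echo n * echo (n + 7) - (5 * echo (n + 3) * echo (n + 4) - echo (n + 1) * echo (n + 6))) = 0 := by
      linear_combination ((-3 : ℚ) * echo (n + 1) ^ 2 * echo (n + 2) ^ 4 + (9 : ℚ) * echo (n + 1) ^ 3 * echo (n + 2) ^ 2 * echo (n + 3) + (-6 : ℚ) * echo (n + 1) ^ 4 * echo (n + 3) ^ 2 + (1 : ℚ) * echo n * echo (n + 2) ^ 5 + (-2 : ℚ) * echo n * echo (n + 1) * echo (n + 2) ^ 3 * echo (n + 3) + (-3 : ℚ) * echo n * echo (n + 1) ^ 2 * echo (n + 2) * echo (n + 3) ^ 2 + (3 : ℚ) * echo n * echo (n + 1) ^ 2 * echo (n + 2) ^ 2 * echo (n + 4) + (-6 : ℚ) * echo n * echo (n + 1) ^ 3 * echo (n + 3) * echo (n + 4) + (2 : ℚ) * echo n ^ 2 * echo (n + 2) ^ 2 * echo (n + 3) ^ 2 + (-1 : ℚ) * echo n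 ^ 2 * echo (n + 2) ^ 3 * echo (n + 4) + (-1 : ℚ) * echo n ^ 2 * echo (n + 1) * echo (n + 3) ^ 3 + (1 : ℚ) * echo n ^ 2 * echo (n + 1) * echo (n + 2) * echo (n + 3) * echo (n + 4) + (-3 : ℚ) * echo n ^ 2 * echo (n + 1) ^ 2 * echo (n + 4) ^ 2) * h4 +
        ((1 : ℚ) * echo n ^ 2 * echo (n + 1) ^ 2 * echo (n + 3) ^ 2 + (1 : ℚ) * echo n ^ 3 * echo (n + 2) * echo (n + 3) ^ 2 + (-1 : ℚ) * echo n ^ 3 * echo (n + 2) ^ 2 * echo (n + 4) + (1 : ℚ) * echo n ^ 3 * echo (n + 1) * echo (n + 3) * echo (n + 4) + (-1 : ℚ) * echo n ^ 3 * echo (n + 1) * echo (n + 2) * echo (n + 5)) * h5 +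
        ((1 : ℚ) * echo n ^ 2 * echo (n + 1) ^ 3 * echo (n + 3) + (1 : ℚ) * echo n ^ 3 * echo (n + 1) ^ 2 * echo (n + 4)) * h6 +
        ((1 : ℚ) * echo n ^ 3 * echo (n + 1) ^ 2 * echo (n + 2)) * h7 +
        ((-1 : ℚ) * echo (n + 2) ^ 4 + (3 : ℚ) * echo (n + 1) * echo (n + 2) ^ 2 * echo (n + 3) + (-2 : ℚ) * echo (n + 1) ^ 2 * echo (n + 3) ^ 2 + (-1 : ℚ) * echo n * echo (n + 2) * echo (n + 3) ^ 2) * hQ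
    have hz := (mul_eq_zero.mp key).resolve_left hm
    linear_combination hz
  · -- n % 3 = 1
    rw [if_neg (show ¬ (3 ∣ (n + 0 + 4)) by omega)] at h4
    rw [if_pos (show 3 ∣ (n + 1 + 4) by omega)] at h5
    rw [if_neg (show ¬ (3 ∣ (n + 2 + 4)) by omega)] at h6
    rw [if_neg (show ¬ (3 ∣ (n + 3 + 4)) by omega)] at h7
    have hQ : (3 : ℚ) * echo n ^ 2 * echo (n + 3) ^ 2 + (1 : ℚ) * echo n * echo (n + 2) ^ 3
        + (1 : ℚ) * echo (n + 1) ^ 3 * echo (n + 3) + (-1 : ℚ) * echo (n + 1) ^ 2 * echo (n + 2) ^ 2 = 0 := by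
      have := hQ0
      simp only [Qex, qA, qB, qC, qD, ht] at this
      norm_num at this ⊢
      linear_combination this
    have key : echo n ^ 2 * echo (n + 1) ^ 2 * echo (n + 2) * echo (n + 3) *
        (echo n * echo (n + 7) - (5 * echo (n + 3) * echo (n + 4) - echo (n + 1) * echo (n + 6))) = 0 := by
      linear_combination ((-1 : ℚ) * echo (n + 1) ^ 2 * echo (n + 2) ^ 4 + (3 : ℚ) * echo (n + 1) ^ 3 * echo (n + 2) ^ 2 * echo (n + 3) + (-2 : ℚ) * echo (n + 1) ^ 4 * echo (n + 3) ^ 2 + (1 : ℚ) * echo n * echo (n + 2) ^ 5 + (-2 : ℚ) * echo n * echo (n + 1) * echo (n + 2) ^ 3 * echo (n + 3) + (-3 : ℚ) * echo n * echo (n + 1) ^ 2 * echo (n + 2) * echo (n + 3) ^ 2 + (1 : ℚ) * echo n * echo (n + 1) ^ 2 * echo (n + 2) ^ 2 * echo (n + 4) + (-2 : ℚ) * echo n * echo (n + 1) ^ 3 * echo (n + 3) * echo (n + 4) + (6 : ℚ) * echo n ^ 2 * echo (n + 2) ^ 2 * echo (n + 3) ^ 2 + (-1 : ℚ) * echo n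 ^ 2 * echo (n + 2) ^ 3 * echo (n + 4) + (-3 : ℚ) * echo n ^ 2 * echo (n + 1) * echo (n + 3) ^ 3 + (1 : ℚ) * echo n ^ 2 * echo (n + 1) * echo (n + 2) * echo (n + 3) * echo (n + 4) + (-1 : ℚ) * echo n ^ 2 * echo (n + 1) ^ 2 * echo (n + 4) ^ 2) * h4 +
        ((1 : ℚ) * echo n ^ 2 * echo (n + 1) ^ 2 * echo (n + 3) ^ 2 + (3 : ℚ) * echo n ^ 3 * echo (n + 2) * echo (n + 3) ^ 2 + (-1 : ℚ) * echo n ^ 3 * echo (n + 2) ^ 2 * echo (n + 4) + (1 : ℚ) * echo n ^ 3 * echo (n + 1) * echo (n + 3) * echo (n + 4) + (-1 : ℚ) * echo n ^ 3 * echo (n + 1) * echo (n + 2) * echo (n + 5)) * h5 +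
        ((1 : ℚ) * echo n ^ 2 * echo (n + 1) ^ 3 * echo (n + 3) + (1 : ℚ) * echo n ^ 3 * echo (n + 1) ^ 2 * echo (n + 4)) * h6 +
        ((1 : ℚ) * echo n ^ 3 * echo (n + 1) ^ 2 * echo (n + 2)) * h7 +
        ((-1 : ℚ) * echo (n + 2) ^ 4 + (3 : ℚ) * echo (n + 1) * echo (n + 2) ^ 2 * echo (n + 3) + (-2 : ℚ) * echo (n + 1) ^ 2 * echo (n + 3) ^ 2 + (-3 : ℚ) * echo n * echo (n + 2) * echo (n + 3) ^ 2) * hQ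
    have hz := (mul_eq_zero.mp key).resolve_left hm
    linear_combination hz
  · -- n % 3 = 2
    rw [if_pos (show 3 ∣ (n + 0 + 4) by omega)] at h4
    rw [if_neg (show ¬ (3 ∣ (n + 1 + 4)) by omega)] at h5
    rw [if_neg (show ¬ (3 ∣ (n + 2 + 4)) by omega)] at h6
    rw [if_pos (show 3 ∣ (n + 3 + 4) by omega)] at h7
    have hQ : (1 : ℚ) * echo n ^ 2 * echo (n + 3) ^ 2 + (3 : ℚ) * echo n * echo (n + 2) ^ 3
        + (1 : ℚ) * echo (n + 1) ^ 3 * echo (n + 3) + (-3 : ℚ) * echo (n + 1) ^ 2 * echo (n + 2) ^ 2 = 0 := by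
      have := hQ0
      simp only [Qex, qA, qB, qC, qD, ht] at this
      norm_num at this ⊢
      linear_combination this
    have key : echo n ^ 2 * echo (n + 1) ^ 2 * echo (n + 2) * echo (n + 3) *
        (echo n * echo (n + 7) - (5 * echo (n + 3) * echo (n + 4) - echo (n + 1) * echo (n + 6))) = 0 := by
      linear_combination ((-9 : ℚ) * echo (n + 1) ^ 2 * echo (n + 2) ^ 4 + (9 : ℚ) * echo (n + 1) ^ 3 * echo (n + 2) ^ 2 * echo (n + 3) + (-2 : ℚ) * echo (n + 1) ^ 4 * echo (n + 3) ^ 2 + (9 : ℚ) * echo n * echo (n + 2) ^ 5 + (-6 : ℚ) * echo n * echo (n + 1) * echo (n + 2) ^ 3 * echo (n + 3) + (-3 : ℚ) * echo n * echo (n + 1) ^ 2 * echo (n + 2) * echo (n + 3) ^ 2 + (3 : ℚ) * echo n * echo (n + 1) ^ 2 * echo (n + 2) ^ 2 * echo (n + 4) + (-2 : ℚ) * echo n * echo (n + 1) ^ 3 * echo (n + 3) * echo (n + 4) + (6 : ℚ) * echo n ^ 2 * echo (n + 2) ^ 2 * echo (n + 3) ^ 2 + (-3 : ℚ) * echo n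 ^ 2 * echo (n + 2) ^ 3 * echo (n + 4) + (-1 : ℚ) * echo n ^ 2 * echo (n + 1) * echo (n + 3) ^ 3 + (1 : ℚ) * echo n ^ 2 * echo (n + 1) * echo (n + 2) * echo (n + 3) * echo (n + 4) + (-1 : ℚ) * echo n ^ 2 * echo (n + 1) ^ 2 * echo (n + 4) ^ 2) * h4 +
        ((1 : ℚ) * echo n ^ 2 * echo (n + 1) ^ 2 * echo (n + 3) ^ 2 + (3 : ℚ) * echo n ^ 3 * echo (n + 2) * echo (n + 3) ^ 2 + (-3 : ℚ) * echo n ^ 3 * echo (n + 2) ^ 2 * echo (n + 4) + (1 : ℚ) * echo n ^ 3 * echo (n + 1) * echo (n + 3) * echo (n + 4) + (-3 : ℚ) * echo n ^ 3 * echo (n + 1) * echo (n + 2) * echo (n + 5)) * h5 +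
        ((1 : ℚ) * echo n ^ 2 * echo (n + 1) ^ 3 * echo (n + 3) + (1 : ℚ) * echo n ^ 3 * echo (n + 1) ^ 2 * echo (n + 4)) * h6 +
        ((1 : ℚ) * echo n ^ 3 * echo (n + 1) ^ 2 * echo (n + 2)) * h7 +
        ((-9 : ℚ) * echo (n + 2) ^ 4 + (9 : ℚ) * echo (n + 1) * echo (n + 2) ^ 2 * echo (n + 3) + (-2 : ℚ) * echo (n + 1) ^ 2 * echo (n + 3) ^ 2 + (-3 : ℚ) * echo n * echo (n + 2) * echo (n + 3) ^ 2) * hQ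
    have hz := (mul_eq_zero.mp key).resolve_left hm
    linear_combination hz
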